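/- Let H be a Hopf algebra over a field k and let B be a left coideal subalgebra of H with inclusion ι : B → H. If ζ : H → B is a convolution-invertible left B-module map (i.e. ζ(ι(b)h) = b·ζ(h) for all b ∈ B, h ∈ H) with convolution inverse ζ̄, then the map γ : H/B⁺H → H defined by γ(π(h)) = Σ ι(ζ̄(h₍₁₎))·h₍₂₎ is well-defined, i.e. γ(π(ι(b)h)) = ε(b)·γ(π(h)) for all b ∈ B, h ∈ H. -/

import Mathlib

/-!
STATEMENT 0: Let H be a Hopf algebra over a field k and B a left coideal subalgebra of H
(inclusion ι : B → H).  If ζ : H → B is a convolution-invertible left B-module map with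
convolution inverse ζ̄, then the map γ∘π : h ↦ Σ ι(ζ̄(h₍₁₎))·h₍₂₎ satisfies
γ(π(ι(b)h)) = ε(b)·γ(π(h)) for all b ∈ B, h ∈ H (so γ is well-defined on H/B⁺H).
-/

open TensorProduct

/-- Convolution product of two linear maps from a coalgebra `H` to an algebra `M`. -/
noncomputable def convMap (k : Type*) {H M : Type*} [CommSemiring k]
    [AddCommMonoid H] [Module k H] [Coalgebra k H] [Semiring M] [Algebra k M]
    (f g : H →ₗ[k] M) : H →ₗ[k] M :=
  LinearMap.mul' k M ∘ₗ TensorProduct.map f g ∘ₗ Coalgebra.comul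

/-! With `u = ι ∘ ζ`, `v = ι ∘ ζ̄` and `γ = v * id` in the convolution algebra of `H →ₗ H`,
associativity gives `id = u * γ`, and since `u` is left `B`-linear, `L_d = (u ∘ L_d) * γ` for
`d ∈ B`, where `L_d` is left multiplication. Writing `Δb = Σ xᵢ ⊗ dᵢ` with `dᵢ ∈ B` and using
`Δ(bh) = Δb Δh`,
`γ ∘ L_b = Σ (v ∘ L_{xᵢ}) * L_{dᵢ} = (Σ (v ∘ L_{xᵢ}) * (u ∘ L_{dᵢ})) * γ = ((v * u) ∘ L_b) * γ`,
which is `ε(b) γ` because `v * u = 1`. -/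

open WithConv LinearMap Coalgebra

section Coalgebra

variable {R C A : Type*} [CommSemiring R] [AddCommMonoid C] [Module R C] [Coalgebra R C]
  [Semiring A] [Algebra R A]

lemma toConv_convMap (f g : C →ₗ[R] A) : toConv (convMap R f g) = toConv f * toConv g := rfl

lemma mulLeft_comp_convMul (a : A) (f g : WithConv (C →ₗ[R] A)) :
    toConv (mulLeft R a ∘ₗ (f * g).ofConv) = toConv (mulLeft R a ∘ₗ f.ofConv) * g := by
  ext c
  simp only [(ℛ R c).convMul_apply, comp_apply, mulLeft_apply, Finset.mul_sum, mul_assoc]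

lemma convMul_algHom_comp_eq_one {A' : Type*} [Semiring A'] [Algebra R A'] (φ : A →ₐ[R] A')
    {f g : C →ₗ[R] A} (hfg : toConv f * toConv g = 1) :
    toConv (φ.toLinearMap ∘ₗ f) * toConv (φ.toLinearMap ∘ₗ g) = 1 := by
  ext c
  simpa [hfg] using
    (LinearMap.congr_fun (algHom_comp_convMul_distrib φ (toConv f) (toConv g)) c).symm

end Coalgebra

section Bialgebra

variable {R C A : Type*} [CommSemiring R] [Semiring C] [Bialgebra R C] [Semiring A] [Algebra R A]

lemma convOne_comp_mulLeft (x : C) :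
    (1 : WithConv (C →ₗ[R] A)).ofConv ∘ₗ mulLeft R x =
      counit (R := R) x • (1 : WithConv (C →ₗ[R] A)).ofConv := by
  ext c
  simp [LinearMap.convOne_def, Bialgebra.counit_mul, Algebra.smul_def]

def twistedConv (f g : C →ₗ[R] A) (t : C ⊗[R] C) : C →ₗ[R] A :=
  mul' R A ∘ₗ map f g ∘ₗ mulLeft R t ∘ₗ comul

lemma twistedConv_add (f g : C →ₗ[R] A) (s t : C ⊗[R] C) :
    twistedConv f g (s + t) = twistedConv f g s + twistedConv f g t := by
  ext c
  simp [twistedConv, add_mul]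

lemma twistedConv_tmul (f g : C →ₗ[R] A) (x y : C) :
    toConv (twistedConv f g (x ⊗ₜ y)) =
      toConv (f ∘ₗ mulLeft R x) * toConv (g ∘ₗ mulLeft R y) := by
  ext c
  simp only [twistedConv, convMul_apply, comp_apply, mulLeft_apply]
  induction comul (R := R) c using TensorProduct.induction_on with
  | zero => simp
  | tmul p q => simp
  | add s t hs ht => simp only [mul_add, map_add, hs, ht]

lemma twistedConv_comul (f g : C →ₗ[R] A) (x : C) :
    twistedConv f g (comul x) = (toConv f * toConv g).ofConv ∘ₗ mulLeft R x := by
  ext c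
  simp [twistedConv, Bialgebra.comul_mul]

variable {B : Subalgebra R C} {u v : C →ₗ[R] C}

lemma toConv_mulLeft_eq_convMul (hu : ∀ (b : B) (h : C), u (b * h) = b * u h)
    (huv : toConv u * toConv v = 1) (d : B) :
    toConv (mulLeft R (d : C)) =
      toConv (u ∘ₗ mulLeft R (d : C)) * (toConv v * toConv LinearMap.id) := by
  have hcomm : mulLeft R (d : C) ∘ₗ u = u ∘ₗ mulLeft R (d : C) := by
    ext h
    exact (hu d h).symm
  calc toConv (mulLeft R (d : C))
      = toConv (mulLeft R (d : C) ∘ₗ (toConv u * (toConv v * toConv LinearMap.id)).ofConv) := by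
        rw [← mul_assoc, huv, one_mul]; rfl
    _ = _ := by rw [mulLeft_comp_convMul, ofConv_toConv, hcomm]

lemma twistedConv_id_eq_convMul (hu : ∀ (b : B) (h : C), u (b * h) = b * u h)
    (huv : toConv u * toConv v = 1) (w : C ⊗[R] B) :
    toConv (twistedConv v LinearMap.id (map LinearMap.id B.val.toLinearMap w)) =
      toConv (twistedConv v u (map LinearMap.id B.val.toLinearMap w)) *
        (toConv v * toConv LinearMap.id) := by
  induction w using TensorProduct.induction_on with
  | zero => ext; simp [twistedConv]
  | tmul x d =>
    simp only [map_tmul, id_coe, id_eq, AlgHom.toLinearMap_apply, Subalgebra.coe_val,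
      twistedConv_tmul, id_comp]
    rw [toConv_mulLeft_eq_convMul hu huv d, mul_assoc]
  | add s t hs ht =>
    simp only [map_add, twistedConv_add, toConv_add, add_mul, hs, ht]

theorem convMul_id_comp_mulLeft_eq_counit_smul
    (hB : ∀ b : B, comul (b : C) ∈ range (map (LinearMap.id : C →ₗ[R] C) B.val.toLinearMap))
    (hu : ∀ (b : B) (h : C), u (b * h) = b * u h)
    (huv : toConv u * toConv v = 1) (hvu : toConv v * toConv u = 1) (b : B) :
    (toConv v * toConv LinearMap.id).ofConv ∘ₗ mulLeft R (b : C) =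
      counit (R := R) (b : C) • (toConv v * toConv LinearMap.id).ofConv := by
  obtain ⟨w, hw⟩ := hB b
  have key := twistedConv_id_eq_convMul hu huv w
  rw [hw, twistedConv_comul, twistedConv_comul, toConv_ofConv, hvu, convOne_comp_mulLeft,
    toConv_smul, toConv_ofConv, smul_mul_assoc, one_mul] at key
  exact congrArg ofConv key

end Bialgebra

theorem stmt0 {k H : Type*} [Field k] [Ring H] [HopfAlgebra k H]
    (B : Subalgebra k H)
    -- B is a left coideal subalgebra: Δ(B) ⊆ H ⊗ B
    (hB : ∀ b : B, Coalgebra.comul (b : H) ∈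
      LinearMap.range (TensorProduct.map (LinearMap.id : H →ₗ[k] H) B.val.toLinearMap))
    (ζ ζbar : H →ₗ[k] B)
    -- ζ is a left B-module map
    (hζmod : ∀ (b : B) (h : H), ζ ((b : H) * h) = b * ζ h)
    -- ζ̄ is the convolution inverse of ζ
    (hinv₁ : convMap k ζ ζbar =
      (Algebra.linearMap k B) ∘ₗ (Coalgebra.counit : H →ₗ[k] k))
    (hinv₂ : convMap k ζbar ζ =
      (Algebra.linearMap k B) ∘ₗ (Coalgebra.counit : H →ₗ[k] k)) :
    -- γ∘π : h ↦ Σ ι(ζ̄(h₍₁₎))·h₍₂₎ satisfies γπ(ι(b)·h) = ε(b) • γπ(h),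
    -- i.e. γ : H/B⁺H → H, π(h) ↦ Σ ι(ζ̄(h₍₁₎))·h₍₂₎ is well-defined
    ∀ (b : B) (h : H),
      (LinearMap.mul' k H ∘ₗ
        TensorProduct.map (B.val.toLinearMap ∘ₗ ζbar) (LinearMap.id) ∘ₗ
        Coalgebra.comul) ((b : H) * h)
      = Coalgebra.counit (R := k) (b : H) •
        (LinearMap.mul' k H ∘ₗ
          TensorProduct.map (B.val.toLinearMap ∘ₗ ζbar) (LinearMap.id) ∘ₗ
          Coalgebra.comul) h := by
  have hu : ∀ (b : B) (h : H),
      (B.val.toLinearMap ∘ₗ ζ) (b * h) = b * (B.val.toLinearMap ∘ₗ ζ) h :=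
    fun b h ↦ by simp [hζmod]
  have hζζbar : toConv ζ * toConv ζbar = 1 := by rw [← toConv_convMap, hinv₁]; rfl
  have hζbarζ : toConv ζbar * toConv ζ = 1 := by rw [← toConv_convMap, hinv₂]; rfl
  intro b h
  exact LinearMap.congr_fun (convMul_id_comp_mulLeft_eq_counit_smul hB hu
    (convMul_algHom_comp_eq_one B.val hζζbar) (convMul_algHom_comp_eq_one B.val hζbarζ) b) h
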